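/- arXiv:2106.03349 — 2 statements merged into one kernel-verified Lean document; each statement's English description precedes it below -/
import Mathlib

section
/- Let V be a finite alphabet, let M be a finite set of full quadtrees of depth at most d_max on the blocks of a 2^{d_max} × 2^{d_max} grid, and for each block s let Θ_s be a finite parameter set with a pmf p_s on Θ_s and conditional pmfs p(v | v^{t−1}, θ_s) on V for θ_s ∈ Θ_s. For a model m, let the parameter tuple θ^m = (θ_s)_{s ∈ L^m} have prior p(θ^m | m) = ∏_{s ∈ L^m} p_s(θ_s), and let the data likelihood be p(v^t | θ^m, m) = ∏_{i ≤ t} p(v_i | v^{i−1}, θ_{s(i)}) where s(i) is the unique leaf of m whose block contains pixel i. Then for any two models m, m' ∈ M, any block s that is a leaf of both m and m', and any sequence v^t with the pixel at time t contained in s and with p(v^{t−1} | m) > 0 and p(v^{t−1} | m') > 0, the predictive distributions coincide: p(v_t | v^{t−1}, m) = p(v_t | v^{t−1}, m'), where p(v_t | v^{t−1}, m) = ∑_{θ^m} p(v_t | v^{t−1}, θ_{s}) p(θ^m | v^{t−1}, m). Hence this common value, denoted q̃(v_t | v^{t−1}, s), depends only on the block s and not on the model m. -/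
inductive FullTree (k : ℕ) : ℕ → Type where
  | leaf {D : ℕ} : FullTree k D
  | node {D : ℕ} (c : Fin k → FullTree k D) : FullTree k (D + 1)

namespace FullTree

def equivZero (k : ℕ) : FullTree k 0 ≃ Unit where
  toFun _ := ()
  invFun _ := .leaf
  left_inv t := by cases t; rfl
  right_inv _ := rfl

def equivSucc (k D : ℕ) : FullTree k (D + 1) ≃ Option (Fin k → FullTree k D) where
  toFun t := match t with
    | .leaf => none
    | .node c => some c
  invFun o := match o with
    | none => .leaf
    | some c => .node c
  left_inv t := by cases t <;> rfl
  right_inv o := by cases o <;> rfl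

instance instFintype (k : ℕ) : (D : ℕ) → Fintype (FullTree k D)
  | 0 => Fintype.ofEquiv Unit (equivZero k).symm
  | (D + 1) => letI := instFintype k D; Fintype.ofEquiv _ (equivSucc k D).symm

noncomputable instance (k D : ℕ) : DecidableEq (FullTree k D) := Classical.decEq _

/-- The set of (paths to) leaf nodes of a full subtree whose root has path `u`. -/
def leaves {k : ℕ} : {D : ℕ} → List (Fin k) → FullTree k D → Finset (List (Fin k))
  | _, u, .leaf => {u}
  | _, u, .node c => Finset.univ.biUnion fun i => leaves (u ++ [i]) (c i)

/-- The set of (paths to) inner nodes of a full subtree whose root has path `u`. -/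
def inners {k : ℕ} : {D : ℕ} → List (Fin k) → FullTree k D → Finset (List (Fin k))
  | _, _, .leaf => ∅
  | _, u, .node c => insert u (Finset.univ.biUnion fun i => inners (u ++ [i]) (c i))

/-- The weight ∏_{u ∈ L^T} (1 - g u) * ∏_{u ∈ I^T} g u of a full subtree rooted at path `u`. -/
noncomputable def weight {k D : ℕ} (g : List (Fin k) → ℝ) (u : List (Fin k))
    (T : FullTree k D) : ℝ :=
  (∏ s ∈ leaves u T, (1 - g s)) * ∏ s ∈ inners u T, g s

end FullTree

namespace FullTree

/-- Follow the path `p` down the full subtree `T` (whose root has path `u`) until a leaf of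
`T` is reached; returns the path of that leaf.  For a pixel `p` (a path of full length
`dmax`), `leafOf [] m p` is the unique leaf block of `m` containing the pixel `p`. -/
def leafOf {k : ℕ} : {D : ℕ} → List (Fin k) → FullTree k D → List (Fin k) → List (Fin k)
  | _, u, .leaf, _ => u
  | _, u, .node _, [] => u
  | _, u, .node c, i :: p => leafOf (u ++ [i]) (c i) p

end FullTree

/-- `jointP dmax V Θ ps f v pix m t` is the marginal likelihood
`p(v^{t-1} | m) = ∑_{θ^m} p(θ^m | m) p(v^{t-1} | θ^m, m)` of the first `t` pixel values
under model `m`, where the parameter tuple `θ^m = (θ_s)_{s ∈ L^m}` has prior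
`∏_{s ∈ L^m} ps s (θ_s)` and the likelihood is `∏_{i < t} f i (s_m(i)) (θ_{s_m(i)}) (v i)`,
grouped here by the leaf `s = s_m(i)` containing pixel `i`. -/
noncomputable def jointP (dmax : ℕ) (V : Type) [Fintype V]
    (Θ : List (Fin 4) → Type) [∀ s, Fintype (Θ s)]
    (ps : (s : List (Fin 4)) → Θ s → ℝ)
    (f : ℕ → (s : List (Fin 4)) → Θ s → V → ℝ)
    (v : ℕ → V) (pix : ℕ → List (Fin 4))
    (m : FullTree 4 dmax) (t : ℕ) : ℝ :=
  ∑ θm : (s : {s // s ∈ FullTree.leaves ([] : List (Fin 4)) m}) → Θ s.val,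
    ∏ s : {s // s ∈ FullTree.leaves ([] : List (Fin 4)) m},
      ps s.val (θm s) *
        ∏ i ∈ (Finset.range t).filter (fun i => FullTree.leafOf [] m (pix i) = s.val),
          f i s.val (θm s) (v i)

/-!
Given the model `m`, the joint evidence `p(v^t | m)` factors over the leaves of `m`: the prior is a
product over leaves and every pixel's likelihood involves only the parameter of its own leaf, so
`p(v^t | m) = ∏_{s ∈ L^m} B_s(t)` with `B_s(t) = ∑_θ p_s(θ) ∏_{i < t, pix i ∈ s} p(v_i | v^{i-1}, θ)`.
Going from `t` to `t + 1` only changes the factor of the leaf containing `pix t`, so the predictive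
ratio `p(v^{t+1} | m) / p(v^t | m)` equals `B_s(t + 1) / B_s(t)`, which does not mention `m`.
-/

namespace FullTree

variable {k : ℕ}

theorem prefix_of_mem_leaves : ∀ {D : ℕ} {u : List (Fin k)} {T : FullTree k D}
    {s : List (Fin k)}, s ∈ leaves u T → u <+: s
  | _, u, .leaf, s, hs => by
      rw [leaves, Finset.mem_singleton] at hs
      exact hs ▸ List.prefix_refl u
  | _, u, .node c, s, hs => by
      simp only [leaves, Finset.mem_biUnion, Finset.mem_univ, true_and] at hs
      obtain ⟨i, hi⟩ := hs
      exact (u.prefix_append [i]).trans (prefix_of_mem_leaves hi)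

theorem leafOf_prefix : ∀ {D : ℕ} (u : List (Fin k)) (T : FullTree k D) (p : List (Fin k)),
    leafOf u T p <+: u ++ p
  | _, u, .leaf, p => by rw [leafOf]; exact u.prefix_append p
  | _, u, .node _, [] => by simp [leafOf]
  | _, u, .node c, i :: p => by
      simpa [leafOf] using leafOf_prefix (u ++ [i]) (c i) p

theorem leafOf_eq_of_prefix : ∀ {D : ℕ} {u : List (Fin k)} {T : FullTree k D}
    {p s : List (Fin k)}, s ∈ leaves u T → s <+: u ++ p → leafOf u T p = s
  | _, u, .leaf, p, s, hs, _ => by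
      rw [leaves, Finset.mem_singleton] at hs
      rw [leafOf, hs]
  | _, u, .node c, [], s, hs, hp => by
      simp only [leaves, Finset.mem_biUnion, Finset.mem_univ, true_and] at hs
      obtain ⟨i, hi⟩ := hs
      have hlong : u.length + 1 ≤ s.length := by simpa using (prefix_of_mem_leaves hi).length_le
      have hshort : s.length ≤ u.length := by simpa using hp.length_le
      omega
  | _, u, .node c, j :: p, s, hs, hp => by
      simp only [leaves, Finset.mem_biUnion, Finset.mem_univ, true_and] at hs
      obtain ⟨i, hi⟩ := hs
      have hij : [i] <+: j :: p :=
        (List.prefix_append_right_inj u).mp ((prefix_of_mem_leaves hi).trans hp)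
      obtain rfl : i = j := by simpa using hij.head
      rw [leafOf]
      exact leafOf_eq_of_prefix hi (by simpa using hp)

theorem leafOf_eq_iff_prefix {D : ℕ} {u : List (Fin k)} {T : FullTree k D}
    {p s : List (Fin k)} (hs : s ∈ leaves u T) : leafOf u T p = s ↔ s <+: u ++ p :=
  ⟨fun h => h ▸ leafOf_prefix u T p, leafOf_eq_of_prefix hs⟩

theorem eq_of_mem_leaves_of_prefix {D : ℕ} {u : List (Fin k)} {T : FullTree k D}
    {p s s' : List (Fin k)} (hs : s ∈ leaves u T) (hs' : s' ∈ leaves u T)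
    (hp : s <+: u ++ p) (hp' : s' <+: u ++ p) : s = s' :=
  (leafOf_eq_of_prefix hs hp).symm.trans (leafOf_eq_of_prefix hs' hp')

end FullTree

section Evidence

variable {dmax : ℕ} {V : Type} {Θ : List (Fin 4) → Type} [∀ s, Fintype (Θ s)]
  {ps : (s : List (Fin 4)) → Θ s → ℝ} {f : ℕ → (s : List (Fin 4)) → Θ s → V → ℝ}
  {v : ℕ → V} {pix : ℕ → List (Fin 4)}

variable (V Θ ps f v pix) in
noncomputable def blockEvidence (s : List (Fin 4)) (t : ℕ) : ℝ :=
  ∑ θ : Θ s, ps s θ * ∏ i ∈ (Finset.range t).filter (fun i => s <+: pix i), f i s θ (v i)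

theorem blockEvidence_succ_of_not_prefix {s : List (Fin 4)} {t : ℕ} (hst : ¬ s <+: pix t) :
    blockEvidence V Θ ps f v pix s (t + 1) = blockEvidence V Θ ps f v pix s t := by
  simp only [blockEvidence, Finset.range_add_one, Finset.filter_insert, if_neg hst]

theorem jointP_eq_prod_blockEvidence [Fintype V] (m : FullTree 4 dmax) (t : ℕ) :
    jointP dmax V Θ ps f v pix m t
      = ∏ s ∈ FullTree.leaves [] m, blockEvidence V Θ ps f v pix s t := by
  rw [jointP, ← Finset.prod_coe_sort]
  simp only [blockEvidence, Fintype.prod_sum]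
  refine Finset.sum_congr rfl fun θ _ => Finset.prod_congr rfl fun s _ => ?_
  congr 2
  exact Finset.filter_congr fun i _ => by simpa using FullTree.leafOf_eq_iff_prefix s.prop

theorem jointP_succ_div_jointP [Fintype V] {m : FullTree 4 dmax} {s : List (Fin 4)}
    (hsm : s ∈ FullTree.leaves [] m) {t : ℕ} (hts : s <+: pix t)
    (hpos : jointP dmax V Θ ps f v pix m t ≠ 0) :
    jointP dmax V Θ ps f v pix m (t + 1) / jointP dmax V Θ ps f v pix m t
      = blockEvidence V Θ ps f v pix s (t + 1) / blockEvidence V Θ ps f v pix s t := by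
  have hrest : ∀ s' ∈ (FullTree.leaves [] m).erase s,
      blockEvidence V Θ ps f v pix s' (t + 1) = blockEvidence V Θ ps f v pix s' t := by
    intro s' hs'
    obtain ⟨hne, hs'm⟩ := Finset.mem_erase.mp hs'
    refine blockEvidence_succ_of_not_prefix fun h => hne ?_
    exact FullTree.eq_of_mem_leaves_of_prefix hs'm hsm h hts
  rw [jointP_eq_prod_blockEvidence, ← Finset.mul_prod_erase _ _ hsm] at hpos ⊢
  rw [jointP_eq_prod_blockEvidence, ← Finset.mul_prod_erase _ _ hsm, Finset.prod_congr rfl hrest]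
  exact mul_div_mul_right _ _ (right_ne_zero_of_mul hpos)

end Evidence

theorem stmt7_general (dmax : ℕ) (V : Type) [Fintype V]
    (Θ : List (Fin 4) → Type) [∀ s, Fintype (Θ s)]
    (ps : (s : List (Fin 4)) → Θ s → ℝ)
    (f : ℕ → (s : List (Fin 4)) → Θ s → V → ℝ)
    (v : ℕ → V) (pix : ℕ → List (Fin 4))
    (m m' : FullTree 4 dmax) (s : List (Fin 4))
    (hsm : s ∈ FullTree.leaves ([] : List (Fin 4)) m)
    (hsm' : s ∈ FullTree.leaves ([] : List (Fin 4)) m')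
    (t : ℕ) (hts : s <+: pix t)
    (hpos : 0 < jointP dmax V Θ ps f v pix m t)
    (hpos' : 0 < jointP dmax V Θ ps f v pix m' t) :
    jointP dmax V Θ ps f v pix m (t + 1) / jointP dmax V Θ ps f v pix m t
      = jointP dmax V Θ ps f v pix m' (t + 1) / jointP dmax V Θ ps f v pix m' t := by
  rw [jointP_succ_div_jointP hsm hts hpos.ne', jointP_succ_div_jointP hsm' hts hpos'.ne']

/-- Lemma 1.  Blocks are encoded by their quadrant paths `List (Fin 4)` of
length `≤ dmax`, pixels by paths of full length `dmax`, and `pix i` is the pixel observed at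
time `i` (raster scan).  If a block `s` is a leaf of both models `m` and `m'`, and the pixel
at time `t` is contained in `s` (i.e. `s` is a prefix of the pixel path `pix t`), and
`p(v^{t-1} | m) > 0`, `p(v^{t-1} | m') > 0`, then the posterior predictive probabilities of
the next pixel value coincide:
`p(v_t | v^{t-1}, m) = p(v^t | m) / p(v^{t-1} | m)` equals the same ratio for `m'`. -/
theorem stmt7 (dmax : ℕ) (V : Type) [Fintype V]
    (Θ : List (Fin 4) → Type) [∀ s, Fintype (Θ s)]
    (ps : (s : List (Fin 4)) → Θ s → ℝ)
    (hps : ∀ s θ, 0 ≤ ps s θ) (hpss : ∀ s, ∑ θ : Θ s, ps s θ = 1)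
    (f : ℕ → (s : List (Fin 4)) → Θ s → V → ℝ)
    (hf : ∀ i s θ x, 0 ≤ f i s θ x) (hfs : ∀ i s θ, ∑ x : V, f i s θ x = 1)
    (v : ℕ → V) (pix : ℕ → List (Fin 4))
    (hpix : ∀ i, (pix i).length = dmax)
    (m m' : FullTree 4 dmax) (s : List (Fin 4))
    (hsm : s ∈ FullTree.leaves ([] : List (Fin 4)) m)
    (hsm' : s ∈ FullTree.leaves ([] : List (Fin 4)) m')
    (t : ℕ) (hts : s <+: pix t)
    (hpos : 0 < jointP dmax V Θ ps f v pix m t)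
    (hpos' : 0 < jointP dmax V Θ ps f v pix m' t) :
    jointP dmax V Θ ps f v pix m (t + 1) / jointP dmax V Θ ps f v pix m t
      = jointP dmax V Θ ps f v pix m' (t + 1) / jointP dmax V Θ ps f v pix m' t :=
  stmt7_general dmax V Θ ps f v pix m m' s hsm hsm' t hts hpos hpos'
end

section
/- Let k ≥ 1 and D ≥ 0, let T̃ be the complete k-ary tree of depth D, with parameters h_u ∈ [0,1] on the nodes, h_u = 0 at depth D, and let φ be defined by φ(u) := 1 at depth D and φ(u) := max{1 − h_u, h_u ∏_i φ(u_{child,i})} otherwise. Define the flag b_u := 0 if 1 − h_u ≥ h_u ∏_i φ(u_{child,i}) and b_u := 1 otherwise, and let T* be the full subtree grown from the root by expanding a node u (giving it its k children) exactly when b_u = 1, and stopping at u when b_u = 0. Then T* attains the maximum: ∏_{u ∈ L^{T*}}(1 − h_u) · ∏_{u' ∈ I^{T*}} h_{u'} = φ(λ) = max over all full subtrees T of ∏_{u ∈ L^T}(1 − h_u) · ∏_{u' ∈ I^T} h_{u'}. In particular, with h_u = g_{u|t} from the quadtree mixture algorithm, T* is a maximum a posteriori model: T* ∈ argmax_m p(m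 | v^t). -/
/-- The likelihood `p(v^{t-1} | m) = ∏_{i < t} q̃(v_i | v^{i-1}, s_m(i))` of the first `t`
pixel values under model `m`, where `qt i s x = q̃(x | v^{i-1}, s)` is the per-block
predictive pmf and `s_m(i)` the unique leaf of `m` containing pixel `i`. -/
noncomputable def like (dmax : ℕ) {V : Type} (qt : ℕ → List (Fin 4) → V → ℝ)
    (v : ℕ → V) (pix : ℕ → List (Fin 4)) (m : FullTree 4 dmax) (t : ℕ) : ℝ :=
  ∏ i ∈ Finset.range t, qt i (FullTree.leafOf [] m (pix i)) (v i)

/-- `Qd dmax qt v pix G t j` is the recursively mixed coding probability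
`q(v_t | v^{t-1}, s)` at the block `s = (pix t).take (dmax - j)` on the path `S_t` of blocks
containing pixel `t` (`j` is the distance from `s` down to the singleton block of `S_t`),
computed with the current weights `G = g_{·|t-1}`:
`q = q̃` at singleton blocks and `q = (1 - g_{s|t-1}) q̃ + g_{s|t-1} q(child)` otherwise. -/
noncomputable def Qd (dmax : ℕ) {V : Type} (qt : ℕ → List (Fin 4) → V → ℝ)
    (v : ℕ → V) (pix : ℕ → List (Fin 4)) (G : List (Fin 4) → ℝ) (t : ℕ) : ℕ → ℝ
  | 0 => qt t ((pix t).take dmax) (v t)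
  | j + 1 =>
    (1 - G ((pix t).take (dmax - (j + 1)))) * qt t ((pix t).take (dmax - (j + 1))) (v t)
      + G ((pix t).take (dmax - (j + 1))) * Qd dmax qt v pix G t j

/-- One step of the weight update: `g_{s|t} = g_{s|t-1}` if `s ∉ S_t` or `|s| = 1`
(`s ∈ S_t` iff `s` is a prefix of the pixel path `pix t`; `|s| = 1` iff `s.length = dmax`),
and `g_{s|t} = g_{s|t-1} · q(v_t | v^{t-1}, s_child) / q(v_t | v^{t-1}, s)` otherwise. -/
noncomputable def Gnext (dmax : ℕ) {V : Type} (qt : ℕ → List (Fin 4) → V → ℝ)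
    (v : ℕ → V) (pix : ℕ → List (Fin 4)) (G : List (Fin 4) → ℝ) (t : ℕ)
    (s : List (Fin 4)) : ℝ :=
  if s <+: pix t ∧ s.length < dmax then
    G s * Qd dmax qt v pix G t (dmax - s.length - 1) / Qd dmax qt v pix G t (dmax - s.length)
  else G s

/-- `GT dmax qt v pix g t s = g_{s|t-1}`: the sequentially updated weights, with
`GT ... 0 s = g_{s|-1} = g s`. -/
noncomputable def GT (dmax : ℕ) {V : Type} (qt : ℕ → List (Fin 4) → V → ℝ)
    (v : ℕ → V) (pix : ℕ → List (Fin 4)) (g : List (Fin 4) → ℝ) : ℕ → List (Fin 4) → ℝ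
  | 0 => g
  | t + 1 => Gnext dmax qt v pix (GT dmax qt v pix g t) t

/-- `phi k h j u` is the recursively defined value `φ(u)` at the node with path `u` of the
complete `k`-ary tree, where `j` is the remaining depth below `u` (so `j = 0` at the deepest
level, where `φ(u) := 1`), and otherwise
`φ(u) := max (1 - h u) (h u * ∏_{i} φ(u ++ [i]))`. -/
noncomputable def phi (k : ℕ) (h : List (Fin k) → ℝ) : ℕ → List (Fin k) → ℝ
  | 0, _ => 1
  | j + 1, u => max (1 - h u) (h u * ∏ i : Fin k, phi k h j (u ++ [i]))

/-- `growStar k h j u` is the full subtree `T*` below the node with path `u` (remaining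
depth `j`) grown by the flags `b_u`: stop at `u` (flag `b_u = 0`) when
`1 - h u ≥ h u * ∏_i φ(u ++ [i])`, and expand `u` into its `k` children (flag `b_u = 1`)
otherwise. -/
noncomputable def growStar (k : ℕ) (h : List (Fin k) → ℝ) : (j : ℕ) → List (Fin k) → FullTree k j
  | 0, _ => .leaf
  | j + 1, u =>
    if 1 - h u ≥ h u * ∏ i : Fin k, phi k h j (u ++ [i]) then .leaf
    else .node fun i => growStar k h j (u ++ [i])

theorem append_singleton_isPrefix_inj {α : Type*} {u s : List α} {a b : α}
    (ha : u ++ [a] <+: s) (hb : u ++ [b] <+: s) : a = b := by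
  have := (List.prefix_of_prefix_length_le ha hb (by simp)).eq_of_length (by simp)
  simpa using this

namespace FullTree

variable {k : ℕ}

theorem prefix_and_length_le_of_mem_leaves {j : ℕ} {T : FullTree k j} {u s : List (Fin k)}
    (hs : s ∈ leaves u T) : u <+: s ∧ s.length ≤ u.length + j := by
  induction T generalizing u with
  | leaf =>
    rw [leaves, Finset.mem_singleton] at hs
    subst hs
    exact ⟨List.prefix_refl _, by omega⟩
  | node c ih =>
    simp only [leaves, Finset.mem_biUnion, Finset.mem_univ, true_and] at hs
    obtain ⟨i, hi⟩ := hs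
    obtain ⟨hpre, hlen⟩ := ih i hi
    exact ⟨(List.prefix_append u [i]).trans hpre, by grind⟩

theorem prefix_and_length_lt_of_mem_inners {j : ℕ} {T : FullTree k j} {u s : List (Fin k)}
    (hs : s ∈ inners u T) : u <+: s ∧ s.length < u.length + j := by
  induction T generalizing u with
  | leaf => simp [inners] at hs
  | node c ih =>
    simp only [inners, Finset.mem_insert, Finset.mem_biUnion, Finset.mem_univ, true_and] at hs
    rcases hs with rfl | ⟨i, hi⟩
    · exact ⟨List.prefix_refl _, by omega⟩
    · obtain ⟨hpre, hlen⟩ := ih i hi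
      exact ⟨(List.prefix_append u [i]).trans hpre, by grind⟩

theorem weight_leaf {j : ℕ} (g : List (Fin k) → ℝ) (u : List (Fin k)) :
    weight g u (.leaf : FullTree k j) = 1 - g u := by
  simp [weight, leaves, inners]

theorem weight_node {j : ℕ} (g : List (Fin k) → ℝ) (u : List (Fin k))
    (c : Fin k → FullTree k j) :
    weight g u (.node c) = g u * ∏ i, weight g (u ++ [i]) (c i) := by
  have hL : Set.PairwiseDisjoint ↑(Finset.univ : Finset (Fin k))
      fun i => leaves (u ++ [i]) (c i) := fun i _ i' _ hne =>
    Finset.disjoint_left.mpr fun s hs hs' => hne <| append_singleton_isPrefix_inj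
      (prefix_and_length_le_of_mem_leaves hs).1 (prefix_and_length_le_of_mem_leaves hs').1
  have hI : Set.PairwiseDisjoint ↑(Finset.univ : Finset (Fin k))
      fun i => inners (u ++ [i]) (c i) := fun i _ i' _ hne =>
    Finset.disjoint_left.mpr fun s hs hs' => hne <| append_singleton_isPrefix_inj
      (prefix_and_length_lt_of_mem_inners hs).1 (prefix_and_length_lt_of_mem_inners hs').1
  have hu : u ∉ Finset.univ.biUnion fun i => inners (u ++ [i]) (c i) := by
    simp only [Finset.mem_biUnion, Finset.mem_univ, true_and, not_exists]
    intro i hi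
    simpa using (prefix_and_length_lt_of_mem_inners hi).1.length_le
  simp only [weight, leaves, inners, Finset.prod_biUnion hL, Finset.prod_insert hu,
    Finset.prod_biUnion hI, Finset.prod_mul_distrib]
  ring

theorem weight_congr {j : ℕ} {g g' : List (Fin k) → ℝ} {u : List (Fin k)} (T : FullTree k j)
    (h : ∀ s, u <+: s → s.length ≤ u.length + j → g s = g' s) :
    weight g u T = weight g' u T := by
  unfold weight
  congr 1 <;> refine Finset.prod_congr rfl fun s hs => ?_
  · obtain ⟨hpre, hlen⟩ := prefix_and_length_le_of_mem_leaves hs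
    rw [h s hpre hlen]
  · obtain ⟨hpre, hlen⟩ := prefix_and_length_lt_of_mem_inners hs
    rw [h s hpre hlen.le]

theorem weight_nonneg {j : ℕ} {g : List (Fin k) → ℝ} {u : List (Fin k)} (T : FullTree k j)
    (h : ∀ s, u <+: s → s.length ≤ u.length + j → g s ∈ Set.Icc (0 : ℝ) 1) :
    0 ≤ weight g u T := by
  refine mul_nonneg (Finset.prod_nonneg fun s hs => ?_) (Finset.prod_nonneg fun s hs => ?_)
  · obtain ⟨hpre, hlen⟩ := prefix_and_length_le_of_mem_leaves hs
    exact sub_nonneg.2 (h s hpre hlen).2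
  · obtain ⟨hpre, hlen⟩ := prefix_and_length_lt_of_mem_inners hs
    exact (h s hpre hlen.le).1

end FullTree

section Optimal

open FullTree

variable {k D : ℕ} {h : List (Fin k) → ℝ}

theorem weight_le_phi (hh : ∀ u : List (Fin k), u.length ≤ D → h u ∈ Set.Icc (0 : ℝ) 1)
    {j : ℕ} (T : FullTree k j) {u : List (Fin k)} (hu : u.length + j ≤ D) :
    weight h u T ≤ phi k h j u := by
  induction T generalizing u with
  | @leaf j =>
    rw [weight_leaf]
    cases j with
    | zero => simpa [phi] using (hh u (by omega)).1
    | succ j => exact le_max_left _ _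
  | @node j c ih =>
    rw [weight_node]
    refine le_trans ?_ (le_max_right _ _)
    refine mul_le_mul_of_nonneg_left (Finset.prod_le_prod (fun i _ => ?_) fun i _ => ?_)
      (hh u (by omega)).1
    · exact weight_nonneg (c i) fun s _ hs => hh s (by grind)
    · exact ih i (by grind)

theorem weight_growStar (hhD : ∀ u : List (Fin k), u.length = D → h u = 0) :
    ∀ (j : ℕ) {u : List (Fin k)}, u.length + j = D →
      weight h u (growStar k h j u) = phi k h j u
  | 0, u, hu => by simp [growStar, phi, weight_leaf, hhD u hu]
  | j + 1, u, hu => by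
    rw [growStar, phi]
    split_ifs with hstop
    · rw [weight_leaf, max_eq_left hstop]
    · rw [weight_node, max_eq_right (not_le.1 hstop).le]
      congr 1
      exact Finset.prod_congr rfl fun i _ => weight_growStar hhD j (by grind)

theorem weight_le_weight_growStar
    (hh : ∀ u : List (Fin k), u.length ≤ D → h u ∈ Set.Icc (0 : ℝ) 1)
    (hhD : ∀ u : List (Fin k), u.length = D → h u = 0) (T : FullTree k D) :
    weight h [] T ≤ weight h [] (growStar k h D []) :=
  (weight_le_phi hh T (by simp)).trans_eq (weight_growStar hhD D (by simp)).symm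

end Optimal

section Quadtree

open FullTree

variable {dmax : ℕ} {V : Type} {qt : ℕ → List (Fin 4) → V → ℝ} {v : ℕ → V}
  {pix : ℕ → List (Fin 4)} {G : List (Fin 4) → ℝ} {t : ℕ}

theorem Qd_pos (hqt : ∀ t s x, 0 < qt t s x)
    (hG : ∀ s : List (Fin 4), s.length ≤ dmax → G s ∈ Set.Icc (0 : ℝ) 1) :
    ∀ j, 0 < Qd dmax qt v pix G t j
  | 0 => hqt _ _ _
  | j + 1 => by
    obtain ⟨hG0, hG1⟩ := hG ((pix t).take (dmax - (j + 1))) (by simp)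
    have hq := hqt t ((pix t).take (dmax - (j + 1))) (v t)
    have hQ := Qd_pos hqt hG j
    rw [Qd]
    nlinarith [mul_nonneg (sub_nonneg.2 hG1) hq.le, mul_nonneg hG0 hQ.le]

theorem Qd_zero (hpix : ∀ i, (pix i).length = dmax) :
    Qd dmax qt v pix G t 0 = qt t (pix t) (v t) := by
  rw [Qd, ← hpix t, List.take_length]

theorem Qd_succ_of_prefix {u : List (Fin 4)} {j : ℕ} (hu : u <+: pix t)
    (hj : u.length + (j + 1) = dmax) :
    Qd dmax qt v pix G t (j + 1) = (1 - G u) * qt t u (v t) + G u * Qd dmax qt v pix G t j := by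
  rw [Qd, show dmax - (j + 1) = u.length by omega, ← List.prefix_iff_eq_take.mp hu]

theorem Gnext_of_prefix {u : List (Fin 4)} {j : ℕ} (hu : u <+: pix t)
    (hj : u.length + (j + 1) = dmax) :
    Gnext dmax qt v pix G t u = G u * Qd dmax qt v pix G t j / Qd dmax qt v pix G t (j + 1) := by
  rw [Gnext, if_pos ⟨hu, by omega⟩, show dmax - u.length = j + 1 by omega, Nat.add_sub_cancel]

theorem Gnext_of_not_prefix {s : List (Fin 4)} (hs : ¬ s <+: pix t) :
    Gnext dmax qt v pix G t s = G s :=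
  if_neg fun h => hs h.1

theorem Gnext_of_length_eq {s : List (Fin 4)} (hs : s.length = dmax) :
    Gnext dmax qt v pix G t s = G s :=
  if_neg fun h => h.2.ne hs

theorem weight_Gnext_of_not_prefix {j : ℕ} {u : List (Fin 4)} (T : FullTree 4 j)
    (hu : ¬ u <+: pix t) : weight (Gnext dmax qt v pix G t) u T = weight G u T :=
  weight_congr T fun _ hus _ => Gnext_of_not_prefix fun hs => hu (hus.trans hs)

theorem Gnext_mem_Icc (hqt : ∀ t s x, 0 < qt t s x)
    (hG : ∀ s : List (Fin 4), s.length ≤ dmax → G s ∈ Set.Icc (0 : ℝ) 1)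
    {s : List (Fin 4)} (hs : s.length ≤ dmax) :
    Gnext dmax qt v pix G t s ∈ Set.Icc (0 : ℝ) 1 := by
  by_cases hpre : s <+: pix t ∧ s.length < dmax
  · obtain ⟨hpre, hlt⟩ := hpre
    have hj : s.length + (dmax - s.length - 1 + 1) = dmax := by omega
    obtain ⟨hG0, hG1⟩ := hG s hs
    have hQ := Qd_pos hqt hG (v := v) (pix := pix) (t := t) (dmax - s.length - 1)
    have hQ' := Qd_pos hqt hG (v := v) (pix := pix) (t := t) (dmax - s.length - 1 + 1)
    rw [Gnext_of_prefix hpre hj]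
    refine ⟨by positivity, (div_le_one hQ').2 ?_⟩
    rw [Qd_succ_of_prefix hpre hj]
    nlinarith [mul_nonneg (sub_nonneg.2 hG1) (hqt t s (v t)).le]
  · rw [Gnext, if_neg hpre]
    exact hG s hs

theorem GT_mem_Icc (hqt : ∀ t s x, 0 < qt t s x) {g : List (Fin 4) → ℝ}
    (hg : ∀ s : List (Fin 4), s.length ≤ dmax → g s ∈ Set.Icc (0 : ℝ) 1) :
    ∀ n (s : List (Fin 4)), s.length ≤ dmax → GT dmax qt v pix g n s ∈ Set.Icc (0 : ℝ) 1
  | 0 => hg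
  | n + 1 => fun _ hs => Gnext_mem_Icc hqt (GT_mem_Icc hqt hg n) hs

theorem GT_eq_zero {g : List (Fin 4) → ℝ}
    (hg1 : ∀ s : List (Fin 4), s.length = dmax → g s = 0) :
    ∀ n (s : List (Fin 4)), s.length = dmax → GT dmax qt v pix g n s = 0
  | 0 => hg1
  | n + 1 => fun s hs => (Gnext_of_length_eq hs).trans (GT_eq_zero hg1 n s hs)

theorem weight_mul_qt_leafOf (hqt : ∀ t s x, 0 < qt t s x) (hpix : ∀ i, (pix i).length = dmax)
    (hG : ∀ s : List (Fin 4), s.length ≤ dmax → G s ∈ Set.Icc (0 : ℝ) 1)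
    {j : ℕ} (T : FullTree 4 j) {u p : List (Fin 4)} (hup : u ++ p = pix t)
    (hj : u.length + j = dmax) :
    weight G u T * qt t (leafOf u T p) (v t)
      = Qd dmax qt v pix G t j * weight (Gnext dmax qt v pix G t) u T := by
  have hQ : ∀ j, Qd dmax qt v pix G t j ≠ 0 := fun j => (Qd_pos hqt hG j).ne'
  have hlen : ∀ {u p : List (Fin 4)}, u ++ p = pix t → u.length + p.length = dmax :=
    fun hup => by rw [← List.length_append, hup, hpix]
  induction T generalizing u p with
  | @leaf j =>
    rw [weight_leaf, weight_leaf, leafOf]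
    cases j with
    | zero =>
      rw [List.eq_nil_of_length_eq_zero (l := p) (by have := hlen hup; omega)] at hup
      rw [Qd_zero hpix, Gnext_of_length_eq (by omega), ← hup, List.append_nil]
      ring
    | succ j =>
      rw [Gnext_of_prefix ⟨p, hup⟩ hj]
      field_simp [hQ]
      rw [Qd_succ_of_prefix ⟨p, hup⟩ hj]
      ring
  | @node j c ih =>
    obtain ⟨i₀, p, rfl⟩ := p.exists_of_length_succ (n := j) (by have := hlen hup; omega)
    have hpath : u ++ [i₀] ++ p = pix t := by simpa using hup
    -- only the child containing pixel `t` sees its weights updated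
    have hoff : ∀ i ∈ ({i₀}ᶜ : Finset (Fin 4)),
        weight (Gnext dmax qt v pix G t) (u ++ [i]) (c i) = weight G (u ++ [i]) (c i) :=
      fun i hi => weight_Gnext_of_not_prefix (c i) fun hpre =>
        (Finset.mem_compl.1 hi) (Finset.mem_singleton.2
          (append_singleton_isPrefix_inj hpre ⟨p, hpath⟩))
    have hchild := ih i₀ hpath (by grind)
    rw [weight_node, weight_node, leafOf, Gnext_of_prefix ⟨_, hup⟩ hj,
      Fintype.prod_eq_mul_prod_compl i₀, Fintype.prod_eq_mul_prod_compl i₀,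
      Finset.prod_congr rfl hoff]
    field_simp [hQ]
    linear_combination (G u * ∏ i ∈ {i₀}ᶜ, weight G (u ++ [i]) (c i)) * hchild

theorem weight_mul_like (hqt : ∀ t s x, 0 < qt t s x) (hpix : ∀ i, (pix i).length = dmax)
    {g : List (Fin 4) → ℝ}
    (hg : ∀ s : List (Fin 4), s.length ≤ dmax → g s ∈ Set.Icc (0 : ℝ) 1)
    (m : FullTree 4 dmax) :
    ∀ n, weight g [] m * like dmax qt v pix m n
      = (∏ i ∈ Finset.range n, Qd dmax qt v pix (GT dmax qt v pix g i) i dmax)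
        * weight (GT dmax qt v pix g n) [] m
  | 0 => by simp [like, GT]
  | n + 1 => by
    have hstep := weight_mul_qt_leafOf (v := v) hqt hpix
      (GT_mem_Icc (v := v) (pix := pix) hqt hg n) m (List.nil_append (pix n)) (by simp)
    rw [like, Finset.prod_range_succ, ← like, ← mul_assoc, weight_mul_like hqt hpix hg m n,
      mul_assoc, hstep, Finset.prod_range_succ, GT]
    ring

end Quadtree

theorem stmt13_general
    -- general k-ary part
    (k D : ℕ) (h : List (Fin k) → ℝ)
    (hh : ∀ u : List (Fin k), u.length ≤ D → h u ∈ Set.Icc (0 : ℝ) 1)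
    (hhD : ∀ u : List (Fin k), u.length = D → h u = 0)
    -- quadtree mixture algorithm part
    (dmax : ℕ) (V : Type)
    (g : List (Fin 4) → ℝ)
    (hg : ∀ s : List (Fin 4), s.length ≤ dmax → g s ∈ Set.Icc (0 : ℝ) 1)
    (hg1 : ∀ s : List (Fin 4), s.length = dmax → g s = 0)
    (qt : ℕ → List (Fin 4) → V → ℝ)
    (hqt : ∀ t s x, 0 < qt t s x)
    (v : ℕ → V) (pix : ℕ → List (Fin 4))
    (hpix : ∀ i, (pix i).length = dmax)
    (t : ℕ) :
    (FullTree.weight h [] (growStar k h D []) = phi k h D [])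
    ∧ (∀ T : FullTree k D, FullTree.weight h [] T ≤ FullTree.weight h [] (growStar k h D []))
    ∧ (∀ m : FullTree 4 dmax,
        FullTree.weight g [] m * like dmax qt v pix m (t + 1)
            / (∑ m' : FullTree 4 dmax,
                FullTree.weight g [] m' * like dmax qt v pix m' (t + 1))
          ≤ FullTree.weight g [] (growStar 4 (GT dmax qt v pix g (t + 1)) dmax [])
              * like dmax qt v pix (growStar 4 (GT dmax qt v pix g (t + 1)) dmax []) (t + 1)
            / ∑ m' : FullTree 4 dmax,
                FullTree.weight g [] m' * like dmax qt v pix m' (t + 1)) := by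
  refine ⟨weight_growStar hhD D (by simp), weight_le_weight_growStar hh hhD, fun m => ?_⟩
  have hevidence : 0 ≤ ∑ m' : FullTree 4 dmax,
      FullTree.weight g [] m' * like dmax qt v pix m' (t + 1) :=
    Finset.sum_nonneg fun m' _ =>
      mul_nonneg (FullTree.weight_nonneg m' fun s _ hs => hg s (by simpa using hs))
        (Finset.prod_nonneg fun i _ => (hqt i _ _).le)
  refine div_le_div_of_nonneg_right ?_ hevidence
  rw [weight_mul_like hqt hpix hg, weight_mul_like hqt hpix hg]
  exact mul_le_mul_of_nonneg_left
    (weight_le_weight_growStar (GT_mem_Icc hqt hg _) (GT_eq_zero hg1 _) m)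
    (Finset.prod_nonneg fun i _ => (Qd_pos hqt (GT_mem_Icc hqt hg i) dmax).le)

/-- (i) The full subtree `T* = growStar k h D []` grown from the root by the
flags attains the maximum of the weight over all full subtrees of the complete `k`-ary tree
of depth `D`: its weight equals `φ(λ)` and dominates the weight of every full subtree.
(ii) In particular, for the quadtree mixture algorithm (`k = 4`) with `h` the sequentially
updated weights `g_{·|t} = GT dmax qt v pix g (t+1)`, the tree `T*` is a maximum a
posteriori model: its posterior probability `p(T* | v^t)` dominates `p(m | v^t)` for every
model `m` (the posterior being `p(m | v^t) = p(m) p(v^t | m) / ∑_{m'} p(m') p(v^t | m')`). -/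
theorem stmt13
    -- general k-ary part
    (k D : ℕ) (hk : 1 ≤ k) (h : List (Fin k) → ℝ)
    (hh : ∀ u : List (Fin k), u.length ≤ D → h u ∈ Set.Icc (0 : ℝ) 1)
    (hhD : ∀ u : List (Fin k), u.length = D → h u = 0)
    -- quadtree mixture algorithm part
    (dmax : ℕ) (V : Type) [Fintype V]
    (g : List (Fin 4) → ℝ)
    (hg : ∀ s : List (Fin 4), s.length ≤ dmax → g s ∈ Set.Icc (0 : ℝ) 1)
    (hg1 : ∀ s : List (Fin 4), s.length = dmax → g s = 0)
    (qt : ℕ → List (Fin 4) → V → ℝ)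
    (hqt : ∀ t s x, 0 < qt t s x)
    (hqts : ∀ t s, ∑ x : V, qt t s x = 1)
    (v : ℕ → V) (pix : ℕ → List (Fin 4))
    (hpix : ∀ i, (pix i).length = dmax)
    (hinj : ∀ i j, i < 4 ^ dmax → j < 4 ^ dmax → pix i = pix j → i = j)
    (t : ℕ) (ht : t < 4 ^ dmax) :
    (FullTree.weight h [] (growStar k h D []) = phi k h D [])
    ∧ (∀ T : FullTree k D, FullTree.weight h [] T ≤ FullTree.weight h [] (growStar k h D []))
    ∧ (∀ m : FullTree 4 dmax,
        FullTree.weight g [] m * like dmax qt v pix m (t + 1)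
            / (∑ m' : FullTree 4 dmax,
                FullTree.weight g [] m' * like dmax qt v pix m' (t + 1))
          ≤ FullTree.weight g [] (growStar 4 (GT dmax qt v pix g (t + 1)) dmax [])
              * like dmax qt v pix (growStar 4 (GT dmax qt v pix g (t + 1)) dmax []) (t + 1)
            / ∑ m' : FullTree 4 dmax,
                FullTree.weight g [] m' * like dmax qt v pix m' (t + 1)) :=
  stmt13_general k D h hh hhD dmax V g hg hg1 qt hqt v pix hpix t
end
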